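/- Let K be a Z × Z nonnegative irreducible matrix with spectral radius r(K) ≥ 1, γ > 0, φ(t) = (1 + t^{1/γ})^γ, and F: ℝ_+^Z → ℝ_+^Z given by Fx = φ(Kx) entrywise. Then for any starting point x_0 ∈ ℝ_+^Z, the iterates x_n = F x_{n−1} satisfy x_n(z) → ∞ as n → ∞ for every coordinate z. -/

import Mathlib

/-! Since `K ≥ 0` and `φ` is increasing, `F` is monotone on `ℝ₊^Z`, so the iterates of any
`x₀ ≥ 0` dominate the orbit `Fⁿ 0`, which is increasing. If that orbit were bounded, its limit
would be a fixed point `l = φ (K l) > K l` with `l ≥ 1`; comparing an eigenvector `w` with `l`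
at a coordinate where `|w i| / l i` is maximal shows that every eigenvalue of `K` then has modulus
`< 1`, contradicting `r(K) ≥ 1`. So some coordinate `z₀` of the orbit is unbounded, and since
`Fᵏ⁺ᵐ 0 ≥ Kᵐ Fᵏ 0`, irreducibility (`(Kᵐ) z z₀ > 0`) makes every coordinate diverge. -/

open Filter

noncomputable def specRad {Z : ℕ} (K : Matrix (Fin Z) (Fin Z) ℝ) : ℝ :=
  sSup ((fun μ : ℂ => ‖μ‖) '' {μ : ℂ | ((K.map (algebraMap ℝ ℂ)).charpoly).IsRoot μ})

open Matrix Set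

section NonnegMatrix

variable {n : Type*} [Fintype n] {K : Matrix n n ℝ}

lemma mulVec_nonneg_of_nonneg (hK : ∀ i j, 0 ≤ K i j) {v : n → ℝ} (hv : 0 ≤ v) :
    0 ≤ K *ᵥ v :=
  fun i => dotProduct_nonneg_of_nonneg (fun j => hK i j) hv

lemma mulVec_mono_of_nonneg (hK : ∀ i j, 0 ≤ K i j) {u v : n → ℝ} (huv : u ≤ v) :
    K *ᵥ u ≤ K *ᵥ v :=
  fun i => dotProduct_le_dotProduct_of_nonneg_left huv (fun j => hK i j)

lemma lt_one_of_smul_le_mulVec (hK : ∀ i j, 0 ≤ K i j) {v : n → ℝ} (hv : ∀ i, 0 < v i)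
    (hKv : ∀ i, (K *ᵥ v) i < v i) {g : n → ℝ} (hg : 0 ≤ g) (hg0 : g ≠ 0) {c : ℝ}
    (hcg : ∀ i, c * g i ≤ (K *ᵥ g) i) : c < 1 := by
  obtain ⟨j, hj⟩ := Function.ne_iff.mp hg0
  obtain ⟨i, -, hi⟩ := Finset.exists_max_image Finset.univ (fun j => g j / v j) ⟨j, by simp⟩
  set t := g i / v i
  have ht : 0 < t :=
    (div_pos ((hg j).lt_of_ne' hj) (hv j)).trans_le (hi j (Finset.mem_univ j))
  have hgt : g ≤ t • v := fun j => (div_le_iff₀ (hv j)).mp (hi j (Finset.mem_univ j))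
  have hgi : g i = t * v i := (div_mul_cancel₀ _ (hv i).ne').symm
  have : c * g i < g i :=
    calc c * g i ≤ (K *ᵥ g) i := hcg i
      _ ≤ (K *ᵥ (t • v)) i := mulVec_mono_of_nonneg hK hgt i
      _ = t * (K *ᵥ v) i := by rw [mulVec_smul, Pi.smul_apply, smul_eq_mul]
      _ < g i := hgi ▸ mul_lt_mul_of_pos_left (hKv i) ht
  exact (mul_lt_iff_lt_one_left (hgi ▸ mul_pos ht (hv i))).mp this

lemma norm_lt_one_of_isRoot_charpoly [DecidableEq n] (hK : ∀ i j, 0 ≤ K i j) {v : n → ℝ}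
    (hv : ∀ i, 0 < v i) (hKv : ∀ i, (K *ᵥ v) i < v i) {μ : ℂ}
    (hμ : (K.map (algebraMap ℝ ℂ)).charpoly.IsRoot μ) : ‖μ‖ < 1 := by
  have hspec := spectrum_toLin' (K.map (algebraMap ℝ ℂ)) ▸ mem_spectrum_iff_isRoot_charpoly.mpr hμ
  obtain ⟨w, hw⟩ := (Module.End.hasEigenvalue_iff_mem_spectrum.mpr hspec).exists_hasEigenvector
  have hw0 : (fun i => ‖w i‖) ≠ 0 := fun h =>
    hw.2 (funext fun i => norm_eq_zero.mp (congrFun h i))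
  refine lt_one_of_smul_le_mulVec hK hv hKv (fun i => norm_nonneg (w i)) hw0 fun i => ?_
  calc ‖μ‖ * ‖w i‖ = ‖(K.map (algebraMap ℝ ℂ) *ᵥ w) i‖ := by
        rw [← toLin'_apply, hw.apply_eq_smul, Pi.smul_apply, smul_eq_mul, norm_mul]
    _ ≤ ∑ j, ‖(K i j : ℂ) * w j‖ := norm_sum_le _ _
    _ = (K *ᵥ fun i => ‖w i‖) i := by
        simp only [norm_mul, Complex.norm_real, Real.norm_of_nonneg (hK i _)]
        rfl

end NonnegMatrix

lemma specRad_lt_one_of_mulVec_lt {Z : ℕ} {K : Matrix (Fin Z) (Fin Z) ℝ}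
    (hK : ∀ i j, 0 ≤ K i j) {v : Fin Z → ℝ} (hv : ∀ i, 0 < v i)
    (hKv : ∀ i, (K *ᵥ v) i < v i) : specRad K < 1 := by
  rw [specRad]
  set S := (fun μ : ℂ => ‖μ‖) '' {μ : ℂ | (K.map (algebraMap ℝ ℂ)).charpoly.IsRoot μ}
  have hS : S.Finite :=
    (Polynomial.finite_setOfPred_isRoot (charpoly_monic _).ne_zero).image _
  rcases S.eq_empty_or_nonempty with hempty | hne
  · rw [hempty, Real.sSup_empty]
    exact zero_lt_one
  · refine (hS.csSup_lt_iff hne).mpr ?_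
    rintro _ ⟨μ, hμ, rfl⟩
    exact norm_lt_one_of_isRoot_charpoly hK hv hKv hμ

section PhiMap

variable {n : Type*} [Fintype n] {K : Matrix n n ℝ} {γ : ℝ}

noncomputable def phiMap (K : Matrix n n ℝ) (γ : ℝ) (v : n → ℝ) : n → ℝ :=
  fun z => (1 + (K *ᵥ v) z ^ (1 / γ)) ^ γ

lemma one_le_phiMap (hK : ∀ i j, 0 ≤ K i j) (hγ : 0 ≤ γ) {v : n → ℝ} (hv : 0 ≤ v) (z : n) :
    1 ≤ phiMap K γ v z :=
  Real.one_le_rpow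
    (le_add_of_nonneg_right (Real.rpow_nonneg (mulVec_nonneg_of_nonneg hK hv z) _)) hγ

lemma phiMap_mono (hK : ∀ i j, 0 ≤ K i j) (hγ : 0 < γ) {u v : n → ℝ} (hu : 0 ≤ u)
    (huv : u ≤ v) : phiMap K γ u ≤ phiMap K γ v := fun z => by
  have hKu := mulVec_nonneg_of_nonneg hK hu z
  unfold phiMap
  gcongr
  · exact add_nonneg zero_le_one (Real.rpow_nonneg hKu _)
  · exact mulVec_mono_of_nonneg hK huv z

lemma mulVec_lt_phiMap (hK : ∀ i j, 0 ≤ K i j) (hγ : 0 < γ) {v : n → ℝ} (hv : 0 ≤ v)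
    (z : n) : (K *ᵥ v) z < phiMap K γ v z := by
  have hKv := mulVec_nonneg_of_nonneg hK hv z
  calc (K *ᵥ v) z = ((K *ᵥ v) z ^ (1 / γ)) ^ γ := by
        rw [one_div, Real.rpow_inv_rpow hKv hγ.ne']
    _ < phiMap K γ v z :=
        Real.rpow_lt_rpow (Real.rpow_nonneg hKv _) (lt_one_add _) hγ

lemma continuous_phiMap (hγ : 0 < γ) : Continuous (phiMap K γ) := by
  have hKv : Continuous (K *ᵥ ·) := continuous_const.matrix_mulVec continuous_id
  refine continuous_pi fun z => (continuous_const.add ?_).rpow_const fun _ => Or.inr hγ.le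
  exact ((continuous_apply z).comp hKv).rpow_const fun _ => Or.inr (one_div_pos.mpr hγ).le

noncomputable def phiOrbit (K : Matrix n n ℝ) (γ : ℝ) (k : ℕ) : n → ℝ :=
  (phiMap K γ)^[k] 0

lemma phiOrbit_succ (K : Matrix n n ℝ) (γ : ℝ) (k : ℕ) :
    phiOrbit K γ (k + 1) = phiMap K γ (phiOrbit K γ k) :=
  Function.iterate_succ_apply' _ _ _

lemma phiOrbit_nonneg (hK : ∀ i j, 0 ≤ K i j) (hγ : 0 ≤ γ) (k : ℕ) : 0 ≤ phiOrbit K γ k := by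
  induction k with
  | zero => exact le_rfl
  | succ k ih => exact fun z => phiOrbit_succ K γ k ▸ zero_le_one.trans (one_le_phiMap hK hγ ih z)

lemma monotone_phiOrbit (hK : ∀ i j, 0 ≤ K i j) (hγ : 0 < γ) : Monotone (phiOrbit K γ) := by
  refine monotone_nat_of_le_succ fun k => ?_
  induction k with
  | zero => exact phiOrbit_nonneg hK hγ.le 1
  | succ k ih =>
    rw [phiOrbit_succ, phiOrbit_succ K γ (k + 1)]
    exact phiMap_mono hK hγ (phiOrbit_nonneg hK hγ.le k) ih

lemma phiOrbit_le_of_iterate (hK : ∀ i j, 0 ≤ K i j) (hγ : 0 < γ) {x : ℕ → n → ℝ}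
    (hx0 : 0 ≤ x 0) (hx : ∀ k, x (k + 1) = phiMap K γ (x k)) (k : ℕ) :
    phiOrbit K γ k ≤ x k := by
  induction k with
  | zero => exact hx0
  | succ k ih =>
    rw [phiOrbit_succ, hx]
    exact phiMap_mono hK hγ (phiOrbit_nonneg hK hγ.le k) ih

lemma pow_apply_mul_phiOrbit_le [DecidableEq n] (hK : ∀ i j, 0 ≤ K i j) (hγ : 0 < γ)
    (m k : ℕ) (z j : n) : (K ^ m) z j * phiOrbit K γ k j ≤ phiOrbit K γ (k + m) z := by
  induction m generalizing z with
  | zero =>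
    rcases eq_or_ne z j with rfl | hzj
    · simp
    · simpa [one_apply_ne hzj] using phiOrbit_nonneg hK hγ.le k z
  | succ m ih =>
    calc (K ^ (m + 1)) z j * phiOrbit K γ k j
        = ∑ i, K z i * ((K ^ m) i j * phiOrbit K γ k j) := by
          simp only [pow_succ', mul_apply, Finset.sum_mul, mul_assoc]
      _ ≤ (K *ᵥ phiOrbit K γ (k + m)) z :=
          Finset.sum_le_sum fun i _ => mul_le_mul_of_nonneg_left (ih i) (hK z i)
      _ ≤ phiOrbit K γ (k + (m + 1)) z :=
          (mulVec_lt_phiMap hK hγ (phiOrbit_nonneg hK hγ.le _) z).le.trans_eq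
            (congrFun (phiOrbit_succ K γ (k + m)) z).symm

lemma tendsto_phiOrbit_atTop [DecidableEq n] (hK : ∀ i j, 0 ≤ K i j) (hγ : 0 < γ) {m : ℕ}
    {z z₀ : n} (hm : 0 < (K ^ m) z z₀) (hz₀ : ¬BddAbove (range fun k => phiOrbit K γ k z₀)) :
    Tendsto (fun k => phiOrbit K γ k z) atTop atTop := by
  have hz₀ : Tendsto (fun k => phiOrbit K γ k z₀) atTop atTop :=
    tendsto_atTop_atTop_of_monotone' (fun _ _ h => monotone_phiOrbit hK hγ h z₀) hz₀
  exact (tendsto_add_atTop_iff_nat m).mp (tendsto_atTop_mono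
    (pow_apply_mul_phiOrbit_le hK hγ m · z z₀) (hz₀.const_mul_atTop hm))

lemma exists_isFixedPt_of_bddAbove_phiOrbit (hK : ∀ i j, 0 ≤ K i j) (hγ : 0 < γ)
    (hbdd : ∀ z, BddAbove (range fun k => phiOrbit K γ k z)) :
    ∃ l, 0 ≤ l ∧ Function.IsFixedPt (phiMap K γ) l := by
  have hlim := tendsto_atTop_ciSup (monotone_phiOrbit hK hγ) (bddAbove_range_pi.mpr hbdd)
  exact ⟨_, (monotone_phiOrbit hK hγ).ge_of_tendsto hlim 0,
    isFixedPt_of_tendsto_iterate hlim (continuous_phiMap hγ).continuousAt⟩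

end PhiMap

lemma specRad_lt_one_of_isFixedPt_phiMap {Z : ℕ} {K : Matrix (Fin Z) (Fin Z) ℝ}
    (hK : ∀ i j, 0 ≤ K i j) {γ : ℝ} (hγ : 0 < γ) {l : Fin Z → ℝ} (hl : 0 ≤ l)
    (hfix : Function.IsFixedPt (phiMap K γ) l) : specRad K < 1 := by
  refine specRad_lt_one_of_mulVec_lt hK (v := l) (fun z => ?_) (fun z => ?_)
  · exact zero_lt_one.trans_le ((one_le_phiMap hK hγ.le hl z).trans_eq (congrFun hfix z))
  · exact (mulVec_lt_phiMap hK hγ hl z).trans_eq (congrFun hfix z)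

theorem iterates_diverge_of_specRad_ge_one_general {Z : ℕ}
    (K : Matrix (Fin Z) (Fin Z) ℝ) (hK : ∀ i j, 0 ≤ K i j)
    (hirr : ∀ i j : Fin Z, ∃ m : ℕ, 0 < (K ^ m) i j)
    (hr : 1 ≤ specRad K)
    (γ : ℝ) (hγ : 0 < γ)
    (x : ℕ → Fin Z → ℝ) (hx0 : ∀ z, 0 ≤ x 0 z)
    (hiter : ∀ n z, x (n + 1) z = (1 + (K.mulVec (x n) z) ^ (1 / γ)) ^ γ) :
    ∀ z, Tendsto (fun n => x n z) atTop atTop := by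
  obtain ⟨z₀, hz₀⟩ : ∃ z₀, ¬BddAbove (range fun k => phiOrbit K γ k z₀) := by
    by_contra! hbdd
    obtain ⟨l, hl, hfix⟩ := exists_isFixedPt_of_bddAbove_phiOrbit hK hγ hbdd
    exact (specRad_lt_one_of_isFixedPt_phiMap hK hγ hl hfix).not_ge hr
  intro z
  obtain ⟨m, hm⟩ := hirr z z₀
  exact tendsto_atTop_mono
    (fun k => phiOrbit_le_of_iterate hK hγ hx0 (fun k => funext (hiter k)) k z)
    (tendsto_phiOrbit_atTop hK hγ hm hz₀)

/-- If `K` is nonnegative, irreducible, and `r(K) ≥ 1`, then the iterates of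
`Fx = φ(Kx)` diverge to infinity in every coordinate. -/
theorem iterates_diverge_of_specRad_ge_one {Z : ℕ} (hZ : 0 < Z)
    (K : Matrix (Fin Z) (Fin Z) ℝ) (hK : ∀ i j, 0 ≤ K i j)
    (hirr : ∀ i j : Fin Z, ∃ m : ℕ, 0 < (K ^ m) i j)
    (hr : 1 ≤ specRad K)
    (γ : ℝ) (hγ : 0 < γ)
    (x : ℕ → Fin Z → ℝ) (hx0 : ∀ z, 0 ≤ x 0 z)
    (hiter : ∀ n z, x (n + 1) z = (1 + (K.mulVec (x n) z) ^ (1 / γ)) ^ γ) :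
    ∀ z, Tendsto (fun n => x n z) atTop atTop :=
  iterates_diverge_of_specRad_ge_one_general K hK hirr hr γ hγ x hx0 hiter
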